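/- arXiv:2101.03342 — 5 statements merged into one kernel-verified Lean document; each statement's English description precedes it below -/
import Mathlib

section
/- Let ≈ be an equivalence relation on a species type S with multiset lifting ≈ₗ, and let μ, ν be multisets over S such that c_H(μ) ≤ c_H(ν) for every ≈-equivalence class H. Then there exists a multiset δ over S with c_H(δ) = c_H(ν) − c_H(μ) for every class H, and the ≈ₗ-equivalence class of ν equals the set { σ + τ | σ ≈ₗ μ, τ ≈ₗ δ }; that is, every ξ ≈ₗ ν can be written as σ + τ with σ ≈ₗ μ and τ ≈ₗ δ, and every such sum is ≈ₗ-equivalent to ν. -/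
open Classical

noncomputable section

/-- A reaction of a stochastic mass-action network:
reagent multiset, kinetic parameter, product multiset. -/
structure Reaction (S : Type*) where
  reag : Multiset S
  rate : ℝ
  prod : Multiset S

variable {S : Type*}

/-- `classCount sd s σ` is the cumulative multiplicity in `σ` of the species in the
≈-equivalence class of `s` (every ≈-class is of this form). -/
def classCount (sd : Setoid S) (s : S) (σ : Multiset S) : ℕ :=
  (σ.filter (sd.r s)).card

/-- The multiset lifting `≈ₗ` of an equivalence relation `≈` on species:
two multisets are related iff they have the same cumulative multiplicity
of every ≈-equivalence class. -/
def mlift (sd : Setoid S) (σ σ' : Multiset S) : Prop :=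
  ∀ s : S, classCount sd s σ = classCount sd s σ'

/-- Cumulative multiplicity in `σ` of an ≈-equivalence class given as an
element of the quotient. -/
def classCountQ (sd : Setoid S) (H : Quotient sd) (σ : Multiset S) : ℕ :=
  (σ.filter (fun x => Quotient.mk sd x = H)).card

/-- The multiset lifting is itself an equivalence relation on multisets. -/
def mliftSetoid (sd : Setoid S) : Setoid (Multiset S) :=
  ⟨mlift sd, ⟨fun _ _ => rfl, fun h s => (h s).symm, fun h1 h2 s => (h1 s).trans (h2 s)⟩⟩

/-- The set of reagent multisets of a reaction network. -/
def Reags (R : Finset (Reaction S)) : Finset (Multiset S) := R.image Reaction.reag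

/-- The set of product multisets of a reaction network. -/
def Prods (R : Finset (Reaction S)) : Finset (Multiset S) := R.image Reaction.prod

/-- Sum of the kinetic parameters of all reactions with reagents `ρ` and products `π`. -/
def rrOff (R : Finset (Reaction S)) (ρ π : Multiset S) : ℝ :=
  ∑ x ∈ R.filter (fun x => x.reag = ρ ∧ x.prod = π), x.rate

/-- The reaction rate `rr(ρ,π)`: the sum of the kinetic parameters of the reactions from
`ρ` to `π` when `ρ ≠ π`, with diagonal correction `rr(ρ,ρ) = -∑_{π' ∈ Prod(R), π' ≠ ρ} rr(ρ,π')`. -/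
def rr (R : Finset (Reaction S)) (ρ π : Multiset S) : ℝ :=
  if ρ = π then -∑ π' ∈ (Prods R).erase ρ, rrOff R ρ π'
  else rrOff R ρ π

/-- Cumulative reaction rate `rr[ρ,B] = ∑_{π ∈ B ∩ (Prod(R) ∪ {ρ})} rr(ρ,π)`. -/
def rrSet (R : Finset (Reaction S)) (ρ : Multiset S) (B : Set (Multiset S)) : ℝ :=
  ∑ π ∈ (insert ρ (Prods R)).filter (· ∈ B), rr R ρ π

/-- Mass-action propensity of a reaction in state `σ`. -/
def propensity (σ : Multiset S) (x : Reaction S) : ℝ :=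
  x.rate * ∏ s ∈ x.reag.toFinset, ((σ.count s).choose (x.reag.count s) : ℝ)

/-- Sum of the propensities in `σ` of all reactions leading from state `σ` to state `θ`. -/
def qOff (R : Finset (Reaction S)) (σ θ : Multiset S) : ℝ :=
  ∑ x ∈ R.filter (fun x => x.reag ≤ σ ∧ σ - x.reag + x.prod = θ), propensity σ x

/-- The (finitely many) states reachable from `σ` in one reaction. -/
def succs (R : Finset (Reaction S)) (σ : Multiset S) : Finset (Multiset S) :=
  (R.filter (fun x => x.reag ≤ σ)).image (fun x => σ - x.reag + x.prod)

/-- CTMC transition rate `q(σ,θ)` of the Markov chain of the network, with the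
convention `q(σ,σ) = -∑_{θ ≠ σ} q(σ,θ)`. -/
def q (R : Finset (Reaction S)) (σ θ : Multiset S) : ℝ :=
  if σ = θ then -∑ θ' ∈ (succs R σ).erase σ, qOff R σ θ'
  else qOff R σ θ

/-- Aggregate transition rate `q[σ,B] = ∑_{θ ∈ B} q(σ,θ)` (finitely many nonzero terms). -/
def qSet (R : Finset (Reaction S)) (σ : Multiset S) (B : Set (Multiset S)) : ℝ :=
  ∑ θ ∈ (insert σ (succs R σ)).filter (· ∈ B), q R σ θ

/-- All kinetic parameters of the network are positive. -/
def posRates (R : Finset (Reaction S)) : Prop := ∀ x ∈ R, 0 < x.rate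

/-- Species equivalence (SE): for all related species `s ≈ s'`, every context `ρ` with
`s+ρ` or `s'+ρ` a reagent multiset of `R`, and every ≈ₗ-class containing at least one
product multiset (represented by `π₀ ∈ Prod(R)`), the cumulative reaction rates agree. -/
def isSE (sd : Setoid S) (R : Finset (Reaction S)) : Prop :=
  ∀ s s' : S, sd.r s s' → ∀ ρ : Multiset S,
    ((s ::ₘ ρ) ∈ Reags R ∨ (s' ::ₘ ρ) ∈ Reags R) →
    ∀ π₀ ∈ Prods R,
      rrSet R (s ::ₘ ρ) {π | mlift sd π₀ π} = rrSet R (s' ::ₘ ρ) {π | mlift sd π₀ π}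

/-- `f` is a representative map for the equivalence `sd`. -/
def IsRep (sd : Setoid S) (f : S → S) : Prop :=
  (∀ s : S, sd.r (f s) s) ∧ ∀ s s' : S, sd.r s s' → f s = f s'

/-- The reduced reaction network of `R` by the representative map `f`: one reaction
`(ρ̂, β, π̂)` for each pair `(ρ̂, π̂)` with `ρ̂ ∈ Reag(R)`, `f(ρ̂) = ρ̂`, `f(π̂) = π̂` and
`β = ∑ { α | (ρ̂,α,π) ∈ R, f(π) = π̂ }` positive. -/
def reduced (R : Finset (Reaction S)) (f : S → S) : Finset (Reaction S) :=
  ((((R.image (fun x => (x.reag, x.prod.map f))).filter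
      (fun p => p.1.map f = p.1)).image
    (fun p => (⟨p.1, ∑ x ∈ R.filter (fun x => x.reag = p.1 ∧ x.prod.map f = p.2), x.rate,
      p.2⟩ : Reaction S)))).filter (fun x => 0 < x.rate)

/-- SMB-reaction rate: sum of parameters with no diagonal correction. -/
def rrSMBSet (R : Finset (Reaction S)) (ρ : Multiset S) (B : Set (Multiset S)) : ℝ :=
  ∑ π ∈ (Prods R).filter (· ∈ B), rrOff R ρ π

/-- Syntactic Markovian bisimulation. -/
def isSMB (sd : Setoid S) (R : Finset (Reaction S)) : Prop :=
  ∀ s s' : S, sd.r s s' → ∀ ρ π₀ : Multiset S,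
    rrSMBSet R (s ::ₘ ρ) {π | mlift sd π₀ π} = rrSMBSet R (s' ::ₘ ρ) {π | mlift sd π₀ π}


lemma cc_cons (sd : Setoid S) (s a : S) (σ : Multiset S) :
    classCount sd s (a ::ₘ σ) = (if sd.r s a then 1 else 0) + classCount sd s σ := by
  simp only [classCount, Multiset.filter_cons]
  split <;> simp [Nat.add_comm]

lemma cc_add (sd : Setoid S) (s : S) (σ τ : Multiset S) :
    classCount sd s (σ + τ) = classCount sd s σ + classCount sd s τ := by
  simp [classCount, Multiset.filter_add]

lemma existsSub (sd : Setoid S) (μ : Multiset S) :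
    ∀ ν : Multiset S, (∀ s : S, classCount sd s μ ≤ classCount sd s ν) →
      ∃ ρ : Multiset S, ρ ≤ ν ∧ mlift sd ρ μ := by
  induction μ using Multiset.induction with
  | empty => exact fun ν _ => ⟨0, Multiset.zero_le ν, fun s => rfl⟩
  | cons a μ ih =>
    intro ν h
    have h1 : 1 ≤ classCount sd a ν := by
      have := h a
      rw [cc_cons] at this
      have hr : sd.r a a := sd.iseqv.refl a
      rw [if_pos hr] at this
      omega
    have hpos : 0 < (ν.filter (sd.r a)).card := by
      unfold classCount at h1; omega
    obtain ⟨t, ht⟩ := Multiset.card_pos_iff_exists_mem.1 hpos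
    have htν : t ∈ ν := Multiset.mem_filter.1 ht |>.1
    have hat : sd.r a t := (Multiset.mem_filter.1 ht).2
    have hν : t ::ₘ ν.erase t = ν := Multiset.cons_erase htν
    have h' : ∀ s : S, classCount sd s μ ≤ classCount sd s (ν.erase t) := by
      intro s
      have := h s
      rw [cc_cons] at this
      rw [← hν, cc_cons] at this
      have hiff : sd.r s a ↔ sd.r s t := ⟨fun h => sd.trans h hat, fun h => sd.trans h (sd.symm hat)⟩
      by_cases hsa : sd.r s a
      · simp [hsa, hiff.1 hsa] at this; omega
      · have hst : ¬ sd.r s t := fun h2 => hsa (hiff.2 h2)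
        simp [hsa, hst] at this; omega
    obtain ⟨ρ, hρle, hρ⟩ := ih (ν.erase t) h'
    refine ⟨t ::ₘ ρ, ?_, ?_⟩
    · rw [← hν]; exact Multiset.cons_le_cons t hρle
    · intro s
      rw [cc_cons, cc_cons, hρ s]
      congr 1
      have hiff : sd.r s a ↔ sd.r s t := ⟨fun h => sd.trans h hat, fun h => sd.trans h (sd.symm hat)⟩
      by_cases hsa : sd.r s a
      · simp [hsa, hiff.1 hsa]
      · have hst : ¬ sd.r s t := fun h2 => hsa (hiff.2 h2)
        simp [hsa, hst]

/-- if `c_H(μ) ≤ c_H(ν)` for every ≈-class `H` then there is a multiset `δ`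
with `c_H(δ) = c_H(ν) − c_H(μ)` for every class, and the ≈ₗ-class of `ν` is exactly
`{ σ + τ | σ ≈ₗ μ, τ ≈ₗ δ }`. -/
theorem mlift_class_eq_add_of_le (sd : Setoid S) (μ ν : Multiset S)
    (h : ∀ s : S, classCount sd s μ ≤ classCount sd s ν) :
    ∃ δ : Multiset S,
      (∀ s : S, classCount sd s δ = classCount sd s ν - classCount sd s μ) ∧
      {ξ : Multiset S | mlift sd ν ξ} =
        {ξ : Multiset S | ∃ σ τ : Multiset S, mlift sd σ μ ∧ mlift sd τ δ ∧ ξ = σ + τ} := by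
  obtain ⟨ρ, hρle, hρ⟩ := existsSub sd μ ν h
  have hνeq : ρ + (ν - ρ) = ν := add_tsub_cancel_of_le hρle
  refine ⟨ν - ρ, ?_, ?_⟩
  · intro s
    have := cc_add sd s ρ (ν - ρ)
    rw [hνeq, hρ s] at this
    omega
  · ext ξ
    simp only [Set.mem_setOf_eq]
    constructor
    · intro hξ
      have hle : ∀ s : S, classCount sd s μ ≤ classCount sd s ξ := fun s => by
        rw [← hξ s]; exact h s
      obtain ⟨σ, hσle, hσ⟩ := existsSub sd μ ξ hle
      refine ⟨σ, ξ - σ, hσ, ?_, (add_tsub_cancel_of_le hσle).symm⟩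
      intro s
      have h1 := cc_add sd s σ (ξ - σ)
      rw [add_tsub_cancel_of_le hσle] at h1
      have h2 := cc_add sd s ρ (ν - ρ)
      rw [hνeq] at h2
      rw [hσ s] at h1
      rw [hρ s] at h2
      have := hξ s
      omega
    · rintro ⟨σ, τ, hσ, hτ, rfl⟩
      intro s
      rw [cc_add, hσ s, hτ s]
      have h2 := cc_add sd s ρ (ν - ρ)
      rw [hνeq, hρ s] at h2
      have := h s
      omega


end
end

section
/- Let ≈ be an equivalence relation on a species type S with multiset lifting ≈ₗ, and let μ, ν be multisets over S such that c_H(μ) ≤ c_H(ν) for every ≈-equivalence class H. Then the set { ν' − μ' | ν' ≈ₗ ν, μ' ≈ₗ μ, μ' ≤ ν' } is exactly the set { δ | c_H(δ) = c_H(ν) − c_H(μ) for every ≈-equivalence class H }; in particular it is a single ≈ₗ-equivalence class. -/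
open Classical

noncomputable section

variable {S : Type*}

private lemma classCount_cons (sd : Setoid S) (s a : S) (t : Multiset S) :
    classCount sd s (a ::ₘ t) = classCount sd s t + (if sd.r s a then 1 else 0) := by
  unfold classCount
  rw [Multiset.filter_cons]
  split <;> simp [Nat.add_comm]

private lemma classCount_add (sd : Setoid S) (s : S) (t u : Multiset S) :
    classCount sd s (t + u) = classCount sd s t + classCount sd s u := by
  simp [classCount, Multiset.filter_add]

private lemma classCount_sub (sd : Setoid S) (s : S) (t u : Multiset S) (h : u ≤ t) :
    classCount sd s (t - u) = classCount sd s t - classCount sd s u := by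
  unfold classCount
  rw [Multiset.filter_sub, Multiset.card_sub (Multiset.filter_le_filter _ h)]

private lemma exists_classCount_sub (sd : Setoid S) (μ : Multiset S) :
    ∀ ν : Multiset S, (∀ s : S, classCount sd s μ ≤ classCount sd s ν) →
      ∃ δ : Multiset S, ∀ s : S,
        classCount sd s δ = classCount sd s ν - classCount sd s μ := by
  induction μ using Multiset.induction with
  | empty =>
      intro ν _
      exact ⟨ν, fun s => by simp [classCount]⟩
  | cons a t ih =>
      intro ν hle
      have hmem : ∃ b ∈ ν, sd.r a b := by
        have h1 : 0 < classCount sd a (a ::ₘ t) := by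
          rw [classCount_cons]
          have hr : sd.r a a := sd.refl a
          simp [hr]
        have h2 : 0 < classCount sd a ν := lt_of_lt_of_le h1 (hle a)
        have hne : (ν.filter (sd.r a)) ≠ 0 := by
          intro h0
          rw [classCount, h0] at h2
          simp at h2
        obtain ⟨b, hb⟩ := Multiset.exists_mem_of_ne_zero hne
        exact ⟨b, (Multiset.mem_filter.mp hb).1, (Multiset.mem_filter.mp hb).2⟩
      obtain ⟨b, hbν, hab⟩ := hmem
      have hν : ν = b ::ₘ ν.erase b := (Multiset.cons_erase hbν).symm
      have hiff : ∀ s, sd.r s b ↔ sd.r s a := fun s =>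
        ⟨fun hh => sd.trans hh (sd.symm hab), fun hh => sd.trans hh hab⟩
      have key : ∀ s, classCount sd s ν
          = classCount sd s (ν.erase b) + (if sd.r s a then 1 else 0) := by
        intro s
        have hc := classCount_cons sd s b (ν.erase b)
        rw [← hν] at hc
        rw [hc]
        congr 1
        exact if_congr (hiff s) rfl rfl
      have hle' : ∀ s, classCount sd s t ≤ classCount sd s (ν.erase b) := by
        intro s
        have h1 := hle s
        rw [classCount_cons, key s] at h1
        omega
      obtain ⟨δ, hδ⟩ := ih (ν.erase b) hle'
      refine ⟨δ, fun s => ?_⟩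
      rw [classCount_cons, key s, hδ s]
      omega

/-- if `c_H(μ) ≤ c_H(ν)` for every ≈-class `H`, then
`{ ν' − μ' | ν' ≈ₗ ν, μ' ≈ₗ μ, μ' ≤ ν' }` is exactly the set of multisets `δ` with
`c_H(δ) = c_H(ν) − c_H(μ)` for every class `H`; in particular it is a single ≈ₗ-class. -/
theorem mlift_sub_set_eq (sd : Setoid S) (μ ν : Multiset S)
    (h : ∀ s : S, classCount sd s μ ≤ classCount sd s ν) :
    ({δ : Multiset S | ∃ ν' μ' : Multiset S,
        mlift sd ν' ν ∧ mlift sd μ' μ ∧ μ' ≤ ν' ∧ δ = ν' - μ'} =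
      {δ : Multiset S | ∀ s : S,
        classCount sd s δ = classCount sd s ν - classCount sd s μ}) ∧
    ∃ δ₀ : Multiset S,
      {δ : Multiset S | ∀ s : S,
        classCount sd s δ = classCount sd s ν - classCount sd s μ} =
      {δ : Multiset S | mlift sd δ₀ δ} := by
  constructor
  · ext δ
    simp only [Set.mem_setOf_eq]
    constructor
    · rintro ⟨ν', μ', hν', hμ', hle', rfl⟩ s
      rw [classCount_sub sd s ν' μ' hle', hν' s, hμ' s]
    · intro hδ
      refine ⟨δ + μ, μ, fun s => ?_, fun s => rfl, Multiset.le_add_left _ _,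
        (add_tsub_cancel_right δ μ).symm⟩
      rw [classCount_add, hδ s]
      have := h s
      omega
  · obtain ⟨δ₀, hδ₀⟩ := exists_classCount_sub sd μ ν h
    refine ⟨δ₀, ?_⟩
    ext δ
    simp only [Set.mem_setOf_eq]
    constructor
    · intro hd s
      rw [hd s, hδ₀ s]
    · intro hd s
      rw [← hd s, hδ₀ s]

end
end

section
/- Let S be a finite type, ≈ an equivalence relation on S, σ a multiset over S, and m a function assigning a natural number m(H) to each ≈-equivalence class H. Then the sum, over all multisets ρ ≤ σ with c_H(ρ) = m(H) for every class H, of the product ∏_{s ∈ S} C(count_σ(s), count_ρ(s)) of binomial coefficients, equals ∏_H C(c_H(σ), m(H)), the product over all ≈-equivalence classes H. -/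
open Classical

noncomputable section

variable {S : Type*}

/-- multiplicity of ρ in powerset σ -/
theorem count_powerset_key {α : Type*} [Fintype α] [DecidableEq α] (σ ρ : Multiset α) :
    (σ.powerset).count ρ = ∏ s : α, (σ.count s).choose (ρ.count s) := by
  classical
  induction σ using Multiset.induction generalizing ρ with
  | empty =>
    by_cases h : ρ = 0
    · subst h; simp
    · obtain ⟨a, ha⟩ := Multiset.exists_mem_of_ne_zero h
      rw [Multiset.powerset_zero]
      rw [Multiset.count_singleton, if_neg h]
      symm
      apply Finset.prod_eq_zero (Finset.mem_univ a)
      simp [Multiset.count_eq_zero_of_notMem, Nat.choose_eq_zero_of_lt,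
        Multiset.count_pos.2 ha]
  | cons a σ ih =>
    rw [Multiset.powerset_cons, Multiset.count_add]
    by_cases ha : a ∈ ρ
    · obtain ⟨τ, rfl⟩ := Multiset.exists_cons_of_mem ha
      have hmap : (Multiset.map (Multiset.cons a) σ.powerset).count (a ::ₘ τ)
          = σ.powerset.count τ := by
        rw [show (a ::ₘ τ) = (fun x => a ::ₘ x) τ from rfl]
        exact Multiset.count_map_eq_count' _ _ (fun x y h => (Multiset.cons_inj_right a).1 h) τ
      rw [hmap, ih, ih]
      rw [Finset.prod_eq_prod_diff_singleton_mul (Finset.mem_univ a)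
        (fun s => ((a ::ₘ σ).count s).choose ((a ::ₘ τ).count s))]
      rw [Finset.prod_eq_prod_diff_singleton_mul (Finset.mem_univ a)
        (fun s => (σ.count s).choose ((a ::ₘ τ).count s))]
      rw [Finset.prod_eq_prod_diff_singleton_mul (Finset.mem_univ a)
        (fun s => (σ.count s).choose (τ.count s))]
      have hrest : ∀ s ∈ Finset.univ \ {a},
          ((a ::ₘ σ).count s).choose ((a ::ₘ τ).count s)
            = (σ.count s).choose ((a ::ₘ τ).count s) := by
        intro s hs
        rw [Finset.mem_sdiff, Finset.mem_singleton] at hs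
        rw [Multiset.count_cons_of_ne hs.2]
      have hrest2 : ∀ s ∈ Finset.univ \ {a},
          (σ.count s).choose ((a ::ₘ τ).count s) = (σ.count s).choose (τ.count s) := by
        intro s hs
        rw [Finset.mem_sdiff, Finset.mem_singleton] at hs
        rw [Multiset.count_cons_of_ne hs.2]
      rw [Finset.prod_congr rfl hrest]
      rw [Multiset.count_cons_self, Multiset.count_cons_self,
        Nat.choose_succ_succ']
      rw [Finset.prod_congr rfl hrest2]
      ring
    · have hmap : (Multiset.map (Multiset.cons a) σ.powerset).count ρ = 0 := by
        rw [Multiset.count_eq_zero]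
        intro h
        obtain ⟨τ, _, rfl⟩ := Multiset.mem_map.1 h
        exact ha (Multiset.mem_cons_self a τ)
      rw [hmap, ih, add_zero]
      apply Finset.prod_congr rfl
      intro s _
      by_cases hs : s = a
      · subst hs
        rw [Multiset.count_eq_zero_of_notMem ha]
        simp
      · rw [Multiset.count_cons_of_ne hs]


theorem powerset_map_aux {α β : Type*} (f : α → β) (σ : Multiset α) :
    (σ.map f).powerset = σ.powerset.map (Multiset.map f) := by
  induction σ using Multiset.induction with
  | empty => simp
  | cons a σ ih =>
    simp [Multiset.powerset_cons, ih, Multiset.map_map, Function.comp]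

/-- Vandermonde-type identity over classes: for finite `S`, the sum over all
sub-multisets `ρ ≤ σ` with prescribed class counts `m` of the products of binomial
coefficients equals the product over all ≈-classes of the class-level binomial coefficients. -/
theorem sum_prod_choose_eq_prod_choose {S : Type*} [Fintype S] (sd : Setoid S)
    (σ : Multiset S) (m : Quotient sd → ℕ) :
    ∑ ρ ∈ σ.powerset.toFinset.filter
        (fun ρ => ∀ H : Quotient sd, classCountQ sd H ρ = m H),
      ∏ s : S, (σ.count s).choose (ρ.count s)
    = ∏ H : Quotient sd, (classCountQ sd H σ).choose (m H) := by
  classical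
  set M : Multiset (Quotient sd) := ∑ H : Quotient sd, (m H) • ({H} : Multiset (Quotient sd))
    with hM
  have hMcount : ∀ H, M.count H = m H := by
    intro H
    simp [hM, Multiset.count_sum', Multiset.count_nsmul, Multiset.count_singleton]
  have hclass : ∀ (ρ : Multiset S) (H : Quotient sd),
      classCountQ sd H ρ = (ρ.map (Quotient.mk sd)).count H := by
    intro ρ H
    rw [classCountQ, Multiset.count_map]
    congr 1
    simp [eq_comm]
  have hP : ∀ ρ : Multiset S,
      (∀ H, classCountQ sd H ρ = m H) ↔ ρ.map (Quotient.mk sd) = M := by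
    intro ρ
    constructor
    · intro h
      rw [Multiset.ext]
      intro H
      rw [← hclass, h, hMcount]
    · intro h H
      rw [hclass, h, hMcount]
  have step1 : ∑ ρ ∈ σ.powerset.toFinset.filter
        (fun ρ => ∀ H : Quotient sd, classCountQ sd H ρ = m H),
      ∏ s : S, (σ.count s).choose (ρ.count s)
      = (σ.powerset.filter
          (fun ρ => ∀ H : Quotient sd, classCountQ sd H ρ = m H)).card := by
    rw [← Multiset.toFinset_sum_count_eq, Multiset.toFinset_filter]
    apply Finset.sum_congr rfl
    intro ρ hρ
    rw [Multiset.count_filter_of_pos (Finset.mem_filter.1 hρ).2]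
    exact (count_powerset_key σ ρ).symm
  rw [step1]
  have step2 : (σ.powerset.filter
        (fun ρ => ∀ H : Quotient sd, classCountQ sd H ρ = m H))
      = σ.powerset.filter (fun ρ => M = ρ.map (Quotient.mk sd)) := by
    apply Multiset.filter_congr
    intro ρ _
    rw [hP ρ, eq_comm]
  rw [step2]
  rw [← Multiset.count_map, ← powerset_map_aux]
  have key2 : ∀ H ∈ (Finset.univ : Finset (Quotient sd)),
      (Multiset.count H (σ.map (Quotient.mk sd))).choose (Multiset.count H M)
        = (classCountQ sd H σ).choose (m H) := by
    intro H _
    rw [← hclass, hMcount]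
  exact (count_powerset_key (σ.map (Quotient.mk sd)) M).trans
    (Finset.prod_congr rfl key2)

end
end

section
/- Let R be a reaction network over a species type S and let ≈ be a species equivalence for R with multiset lifting ≈ₗ. Let σ be a state and τ a state with ¬(σ ≈ₗ τ). For a multiset ρ define Mgt(ρ) = { π | there exist σ' ≈ₗ σ and ρ' ≈ₗ ρ with ρ' ≤ σ' and σ' − ρ' + π ≈ₗ τ }. Then q[σ, {θ | θ ≈ₗ τ}] = ∑_{B̄} rr[ρ_{B̄}, Mgt(ρ_{B̄})] · ∏_H C(c_H(σ), c_H(ρ_{B̄})), where the sum ranges over all ≈ₗ-equivalence classes B̄ (with finitely many nonzero summands), ρ_{B̄} denotes an arbitrary element of B̄ (the summand being independent of this choice), and the product ranges over all ≈-equivalence classes H. -/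
open Classical

noncomputable section

variable {S : Type*}

/-- The summand associated with (a representative `ρ` of) an ≈ₗ-class `B̄`:
`rr[ρ, Mgt(ρ)] · ∏_H C(c_H(σ), c_H(ρ))`, the product ranging over all ≈-classes `H`. -/
def seSummand (sd : Setoid S) (R : Finset (Reaction S)) (σ τ ρ : Multiset S) : ℝ :=
  rrSet R ρ {π | ∃ σ' ρ' : Multiset S,
      mlift sd σ σ' ∧ mlift sd ρ ρ' ∧ ρ' ≤ σ' ∧ mlift sd (σ' - ρ' + π) τ} *
    ∏ᶠ H : Quotient sd, ((classCountQ sd H σ).choose (classCountQ sd H ρ) : ℝ)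

/-! Grouping the reactions that fire from `σ` by their reagents `ρ ≤ σ`, the mass-action factor
`∏ₛ C(σ(s), ρ(s))` is the multiplicity of `ρ` in the powerset of `σ`, so `q[σ, [τ]]` is the sum of
`rr[ρ, Mgt(ρ)]` over the sub-multisets `ρ` of `σ`, counted with multiplicity. `Mgt(ρ)` is a union of
`≈ₗ`-classes not containing `ρ`, and `≈ₗ`-related multisets are joined by swaps of single
equivalent species, so species equivalence makes `rr[ρ, Mgt(ρ)]` depend only on the class of `ρ`.
Finally, mapping species to their `≈`-classes turns the powerset of `σ` into the powerset of its
image, so the sub-multisets of `σ` in the class of `ρ` number `∏_H C(c_H(σ), c_H(ρ))`. -/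

namespace Multiset

variable {α β : Type*}

theorem count_map_cons [DecidableEq α] (a : α) (ρ : Multiset α)
    (X : Multiset (Multiset α)) :
    count ρ (X.map (cons a)) = if a ∈ ρ then count (ρ.erase a) X else 0 := by
  split_ifs with ha
  · conv_lhs => rw [← cons_erase ha]
    exact count_map_eq_count' _ _ (fun _ _ => (cons_inj_right a).mp) _
  · exact count_eq_zero.mpr fun h => by
      obtain ⟨μ, -, rfl⟩ := mem_map.mp h
      exact ha (mem_cons_self a μ)

theorem prod_choose_count_of_subset [DecidableEq α] (σ : Multiset α) {ρ : Multiset α}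
    {T : Finset α} (hT : ρ.toFinset ⊆ T) :
    ∏ s ∈ T, (count s σ).choose (count s ρ) = ∏ s ∈ ρ.toFinset, (count s σ).choose (count s ρ) :=
  (Finset.prod_subset hT fun s _ hs => by
    rw [count_eq_zero_of_notMem (by simpa using hs : s ∉ ρ), Nat.choose_zero_right]).symm

theorem count_powerset [DecidableEq α] (σ ρ : Multiset α) :
    count ρ σ.powerset = ∏ s ∈ ρ.toFinset, (count s σ).choose (count s ρ) := by
  induction σ using Multiset.induction_on generalizing ρ with
  | empty =>
    by_cases hρ : ρ = 0
    · simp [hρ]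
    · obtain ⟨s, hs⟩ := exists_mem_of_ne_zero hρ
      rw [powerset_zero, count_singleton, if_neg hρ, eq_comm]
      exact Finset.prod_eq_zero (mem_toFinset.mpr hs)
        (Nat.choose_eq_zero_of_lt (by simpa using count_pos.mpr hs))
  | cons a σ ih =>
    rw [powerset_cons, count_add, count_map_cons, ih]
    split_ifs with ha
    · have haT : a ∈ ρ.toFinset := mem_toFinset.mpr ha
      obtain ⟨k, hk⟩ : ∃ k, count a ρ = k + 1 :=
        ⟨count a ρ - 1, by have := count_pos.mpr ha; omega⟩
      rw [ih, ← prod_choose_count_of_subset σ (toFinset_subset.mpr (erase_subset a ρ)),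
        ← Finset.mul_prod_erase _ _ haT, ← Finset.mul_prod_erase _ _ haT,
        ← Finset.mul_prod_erase _ _ haT, count_cons_self, count_erase_self, hk,
        Nat.choose_succ_succ', add_mul, add_comm, Nat.add_sub_cancel]
      congr 2 <;> refine Finset.prod_congr rfl fun s hs => ?_ <;>
        simp only [count_cons_of_ne (Finset.ne_of_mem_erase hs),
          count_erase_of_ne (Finset.ne_of_mem_erase hs)]
    · rw [add_zero]
      refine Finset.prod_congr rfl fun s hs => ?_
      rw [count_cons_of_ne (by rintro rfl; exact ha (mem_toFinset.mp hs))]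

theorem powerset_map (f : α → β) (s : Multiset α) :
    (s.map f).powerset = s.powerset.map (map f) := by
  induction s using Multiset.induction_on with
  | empty => simp
  | cons a s ih => simp [powerset_cons, ih, map_map]

theorem card_filter_powerset_map_eq [DecidableEq β] (f : α → β) (σ : Multiset α)
    (n : Multiset β) :
    card (σ.powerset.filter (fun ρ => ρ.map f = n)) =
      ∏ b ∈ n.toFinset, (count b (σ.map f)).choose (count b n) := by
  rw [← count_powerset, powerset_map, count_map]
  simp only [eq_comm]

theorem sum_map_filter_fiberwise {M : Type*} [AddCommMonoid M] [DecidableEq β]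
    (m : Multiset α) (g : α → M) {f : α → β} {T : Finset β} (h : ∀ a ∈ m, f a ∈ T) :
    ∑ b ∈ T, ((m.filter (f · = b)).map g).sum = (m.map g).sum := by
  induction m using Multiset.induction_on with
  | empty => simp
  | cons a m ih =>
    simp only [filter_cons, map_add, sum_add, Finset.sum_add_distrib]
    rw [ih fun x hx => h x (mem_cons_of_mem hx)]
    simp only [apply_ite, map_singleton, sum_singleton, map_zero, sum_zero]
    rw [Finset.sum_ite_eq, if_pos (h a (mem_cons_self a m)), map_cons, sum_cons]

theorem support_sum_map_filter_subset {M : Type*} [AddCommMonoid M] [DecidableEq β]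
    (m : Multiset α) (g : α → M) (f : α → β) :
    Function.support (fun b => ((m.filter (f · = b)).map g).sum) ⊆ (m.map f).toFinset := by
  intro b hb
  by_contra hbm
  simp only [Function.mem_support] at hb
  rw [filter_eq_nil.mpr fun a ha hab => hbm (by simpa using ⟨a, ha, hab⟩), map_zero,
    sum_zero] at hb
  exact hb rfl

theorem finsum_sum_map_filter {M : Type*} [AddCommMonoid M] [DecidableEq β]
    (m : Multiset α) (g : α → M) (f : α → β) :
    ∑ᶠ b, ((m.filter (f · = b)).map g).sum = (m.map g).sum :=
  (finsum_eq_sum_of_support_subset _ (support_sum_map_filter_subset m g f)).trans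
    (sum_map_filter_fiberwise m g fun _ ha => mem_toFinset.mpr (mem_map_of_mem f ha))

theorem map_tsub_of_le [DecidableEq α] [DecidableEq β] (f : α → β) {s t : Multiset α}
    (h : s ≤ t) : (t - s).map f = t.map f - s.map f := by
  rw [eq_tsub_iff_add_eq_of_le (map_le_map h), ← map_add, tsub_add_cancel_of_le h]

end Multiset

section Lifting

variable {sd : Setoid S}

theorem classCount_eq_count_map (s : S) (σ : Multiset S) :
    classCount sd s σ = (σ.map (Quotient.mk sd)).count (Quotient.mk sd s) := by
  rw [classCount, Multiset.count_map]
  exact congrArg _ (Multiset.filter_congr fun a _ => Quotient.eq.symm)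

theorem classCountQ_eq_count_map (H : Quotient sd) (σ : Multiset S) :
    classCountQ sd H σ = (σ.map (Quotient.mk sd)).count H := by
  simp only [classCountQ, Multiset.count_map, eq_comm]

theorem mlift_iff_map_eq {σ σ' : Multiset S} :
    mlift sd σ σ' ↔ σ.map (Quotient.mk sd) = σ'.map (Quotient.mk sd) := by
  simp only [mlift, classCount_eq_count_map, Multiset.ext]
  exact ⟨fun h H => Quotient.inductionOn H h, fun h s => h _⟩

theorem equivalence_mlift : Equivalence (mlift sd) := (mliftSetoid sd).iseqv

theorem mk_mliftSetoid_eq_iff {σ σ' : Multiset S} :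
    Quotient.mk (mliftSetoid sd) σ = Quotient.mk _ σ' ↔
      σ.map (Quotient.mk sd) = σ'.map (Quotient.mk sd) :=
  Quotient.eq.trans mlift_iff_map_eq

theorem mlift_cons_cons {s s' : S} (h : sd.r s s') (μ : Multiset S) :
    mlift sd (s ::ₘ μ) (s' ::ₘ μ) := by
  rw [mlift_iff_map_eq, Multiset.map_cons, Multiset.map_cons, Quotient.sound h]

theorem exists_mem_of_mlift_cons {a : S} {ρ ρ' : Multiset S} (h : mlift sd (a ::ₘ ρ) ρ') :
    ∃ b ∈ ρ', sd.r a b ∧ mlift sd ρ (ρ'.erase b) := by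
  rw [mlift_iff_map_eq, Multiset.map_cons] at h
  obtain ⟨b, hb, hba⟩ := Multiset.mem_map.mp (h ▸ Multiset.mem_cons_self _ _)
  refine ⟨b, hb, Quotient.exact hba.symm, ?_⟩
  rw [mlift_iff_map_eq, Multiset.map_erase_of_mem _ _ hb, ← h, hba, Multiset.erase_cons_head]

theorem mlift_tsub_add {σ σ' ρ ρ' π π' : Multiset S} (hσ : mlift sd σ σ') (hρ : mlift sd ρ ρ')
    (hπ : mlift sd π π') (h : ρ ≤ σ) (h' : ρ' ≤ σ') : mlift sd (σ - ρ + π) (σ' - ρ' + π') := by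
  rw [mlift_iff_map_eq] at *
  simp only [Multiset.map_add, Multiset.map_tsub_of_le _ h, Multiset.map_tsub_of_le _ h', hσ, hρ,
    hπ]

end Lifting

def MliftClosed (sd : Setoid S) (M : Set (Multiset S)) : Prop :=
  ∀ ⦃π π'⦄, π ∈ M → mlift sd π π' → π' ∈ M

section Rates

variable {R : Finset (Reaction S)} {ρ : Multiset S} {M : Set (Multiset S)}

theorem rrOff_eq_zero (h : ρ ∉ Reags R) (π : Multiset S) : rrOff R ρ π = 0 :=
  Finset.sum_eq_zero fun x hx => by
    obtain ⟨hxR, rfl, -⟩ := Finset.mem_filter.mp hx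
    exact absurd (Finset.mem_image_of_mem _ hxR) h

theorem rrSet_eq_sum_rrOff (h : ρ ∉ M) :
    rrSet R ρ M = ∑ π ∈ (Prods R).filter (· ∈ M), rrOff R ρ π := by
  rw [rrSet, Finset.filter_insert, if_neg h]
  refine Finset.sum_congr rfl fun π hπ => if_neg ?_
  rintro rfl
  exact h (Finset.mem_filter.mp hπ).2

theorem rrSet_eq_zero (hreag : ρ ∉ Reags R) (h : ρ ∉ M) : rrSet R ρ M = 0 := by
  rw [rrSet_eq_sum_rrOff h]
  exact Finset.sum_eq_zero fun π _ => rrOff_eq_zero hreag π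

theorem sum_rate_eq_rrSet (h : ρ ∉ M) :
    ∑ x ∈ R.filter (fun x => x.reag = ρ ∧ x.prod ∈ M), x.rate = rrSet R ρ M := by
  rw [rrSet_eq_sum_rrOff h, ← Finset.sum_fiberwise_of_maps_to (g := Reaction.prod)
    fun x hx => by
      obtain ⟨hxR, -, hxM⟩ := Finset.mem_filter.mp hx
      exact Finset.mem_filter.mpr ⟨Finset.mem_image_of_mem _ hxR, hxM⟩]
  refine Finset.sum_congr rfl fun π hπ => Finset.sum_congr ?_ fun _ _ => rfl
  ext x
  simp only [Finset.mem_filter]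
  constructor
  · rintro ⟨⟨hxR, hρ, -⟩, hπ⟩
    exact ⟨hxR, hρ, hπ⟩
  · rintro ⟨hxR, hρ, rfl⟩
    exact ⟨⟨hxR, hρ, (Finset.mem_filter.mp hπ).2⟩, rfl⟩

variable {sd : Setoid S}

theorem rrSet_eq_sum_rrSet_classes (hM : MliftClosed sd M) (h : ρ ∉ M) :
    rrSet R ρ M = ∑ C ∈ ((Prods R).filter (· ∈ M)).image (Quotient.mk (mliftSetoid sd)),
      rrSet R ρ {π | Quotient.mk (mliftSetoid sd) π = C} := by
  rw [rrSet_eq_sum_rrOff h, ← Finset.sum_fiberwise_of_maps_to (g := Quotient.mk (mliftSetoid sd))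
    fun π hπ => Finset.mem_image_of_mem _ hπ]
  refine Finset.sum_congr rfl fun C hC => ?_
  obtain ⟨π₀, hπ₀, rfl⟩ := Finset.mem_image.mp hC
  have hπ₀M := (Finset.mem_filter.mp hπ₀).2
  rw [rrSet_eq_sum_rrOff fun hρ => h (hM hπ₀M ((mliftSetoid sd).symm (Quotient.exact hρ)))]
  refine Finset.sum_congr ?_ fun _ _ => rfl
  ext π
  simp only [Finset.mem_filter, Set.mem_ofPred_eq, and_assoc]
  exact and_congr_right fun _ =>
    ⟨And.right, fun hπ => ⟨hM hπ₀M ((mliftSetoid sd).symm (Quotient.exact hπ)), hπ⟩⟩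

theorem rrSet_cons_eq_of_isSE (hse : isSE sd R) (hM : MliftClosed sd M) {s s' : S}
    (hs : sd.r s s') {μ : Multiset S} (hμ : s ::ₘ μ ∉ M) :
    rrSet R (s ::ₘ μ) M = rrSet R (s' ::ₘ μ) M := by
  have hμ' : s' ::ₘ μ ∉ M := fun h => hμ (hM h (mlift_cons_cons (sd.symm hs) μ))
  by_cases hreag : s ::ₘ μ ∈ Reags R ∨ s' ::ₘ μ ∈ Reags R
  · rw [rrSet_eq_sum_rrSet_classes hM hμ, rrSet_eq_sum_rrSet_classes hM hμ']
    refine Finset.sum_congr rfl fun C hC => ?_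
    obtain ⟨π₀, hπ₀, rfl⟩ := Finset.mem_image.mp hC
    have hclass : {π | Quotient.mk (mliftSetoid sd) π = Quotient.mk _ π₀} = {π | mlift sd π₀ π} :=
      Set.ext fun π => Quotient.eq.trans ⟨equivalence_mlift.symm, equivalence_mlift.symm⟩
    rw [hclass]
    exact hse s s' hs μ hreag π₀ (Finset.mem_filter.mp hπ₀).1
  · push Not at hreag
    rw [rrSet_eq_zero hreag.1 hμ, rrSet_eq_zero hreag.2 hμ']

theorem rrSet_eq_of_mlift (hse : isSE sd R) (hM : MliftClosed sd M) {ρ' : Multiset S}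
    (h : mlift sd ρ ρ') (hρ : ρ ∉ M) : rrSet R ρ M = rrSet R ρ' M := by
  -- a context `μ` lets the induction perform the swap `a ≈ b` anywhere in the multiset
  suffices ∀ μ, μ + ρ ∉ M → rrSet R (μ + ρ) M = rrSet R (μ + ρ') M by
    simpa using this 0 (by simpa using hρ)
  clear hρ
  induction ρ using Multiset.induction_on generalizing ρ' with
  | empty =>
    rw [mlift_iff_map_eq, Multiset.map_zero, eq_comm, Multiset.map_eq_zero] at h
    simp [h]
  | cons a ρ ih =>
    obtain ⟨b, hb, hab, hρρ'⟩ := exists_mem_of_mlift_cons h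
    intro μ hμ
    rw [Multiset.add_cons] at hμ ⊢
    have hμ' : b ::ₘ μ + ρ ∉ M := fun h' =>
      hμ (hM h' (by rw [Multiset.cons_add]; exact mlift_cons_cons (sd.symm hab) _))
    rw [rrSet_cons_eq_of_isSE hse hM hab hμ, ← Multiset.cons_add, ih hρρ' _ hμ',
      Multiset.cons_add, ← Multiset.add_cons, Multiset.cons_erase hb]

end Rates

def Mgt (sd : Setoid S) (σ τ ρ : Multiset S) : Set (Multiset S) :=
  {π | ∃ σ' ρ' : Multiset S,
      mlift sd σ σ' ∧ mlift sd ρ ρ' ∧ ρ' ≤ σ' ∧ mlift sd (σ' - ρ' + π) τ}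

section Summands

variable {sd : Setoid S} {σ τ : Multiset S}

theorem Mgt_congr {ρ ρ' : Multiset S} (h : mlift sd ρ ρ') : Mgt sd σ τ ρ = Mgt sd σ τ ρ' := by
  ext π
  exact exists₂_congr fun σ' ρ'' => and_congr_right fun _ =>
    and_congr_left fun _ => ⟨equivalence_mlift.trans (equivalence_mlift.symm h),
      equivalence_mlift.trans h⟩

theorem mliftClosed_Mgt (ρ : Multiset S) : MliftClosed sd (Mgt sd σ τ ρ) := by
  rintro π π' ⟨σ', ρ', hσ, hρ, hle, hτ⟩ hπ
  exact ⟨σ', ρ', hσ, hρ, hle, equivalence_mlift.trans (mlift_tsub_add (equivalence_mlift.refl σ')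
    (equivalence_mlift.refl ρ') (equivalence_mlift.symm hπ) hle hle) hτ⟩

theorem mem_Mgt_iff {ρ ρ' π : Multiset S} (hle : ρ' ≤ σ) (h : mlift sd ρ ρ') :
    π ∈ Mgt sd σ τ ρ ↔ mlift sd (σ - ρ' + π) τ := by
  refine ⟨fun ⟨σ'', ρ'', hσ, hρ, hle', hτ⟩ => equivalence_mlift.trans ?_ hτ,
    fun hτ => ⟨σ, ρ', equivalence_mlift.refl σ, h, hle, hτ⟩⟩
  exact mlift_tsub_add hσ (equivalence_mlift.trans (equivalence_mlift.symm h) hρ)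
    (equivalence_mlift.refl π) hle hle'

theorem notMem_Mgt (hστ : ¬ mlift sd σ τ) {ρ ρ' : Multiset S} (h : mlift sd ρ ρ') :
    ρ' ∉ Mgt sd σ τ ρ := by
  rintro ⟨σ', ρ'', hσ, hρ, hle, hτ⟩
  refine hστ (equivalence_mlift.trans ?_ hτ)
  rw [mlift_iff_map_eq] at *
  rw [Multiset.map_add, Multiset.map_tsub_of_le _ hle, hσ, ← hρ, h,
    tsub_add_cancel_of_le (by rw [← h, hρ]; exact Multiset.map_le_map hle)]

theorem rrSet_Mgt_eq_of_mlift {R : Finset (Reaction S)} (hse : isSE sd R)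
    (hστ : ¬ mlift sd σ τ) {ρ ρ' : Multiset S} (h : mlift sd ρ ρ') :
    rrSet R ρ (Mgt sd σ τ ρ) = rrSet R ρ' (Mgt sd σ τ ρ') := by
  rw [← Mgt_congr h]
  exact rrSet_eq_of_mlift hse (mliftClosed_Mgt ρ) h (notMem_Mgt hστ (equivalence_mlift.refl ρ))

theorem card_filter_powerset_mk_eq (σ ρ : Multiset S) :
    ((σ.powerset.filter (Quotient.mk (mliftSetoid sd) · = Quotient.mk _ ρ)).card : ℝ) =
      ∏ᶠ H : Quotient sd, ((classCountQ sd H σ).choose (classCountQ sd H ρ) : ℝ) := by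
  simp only [mk_mliftSetoid_eq_iff, Multiset.card_filter_powerset_map_eq, classCountQ_eq_count_map]
  rw [finprod_eq_prod_of_mulSupport_subset (s := (ρ.map (Quotient.mk sd)).toFinset)]
  · push_cast
    rfl
  · intro H hH
    by_contra hρ
    rw [Finset.mem_coe, Multiset.mem_toFinset, ← Multiset.count_eq_zero] at hρ
    exact hH (by simp [hρ])

theorem seSummand_eq_sum_filter_powerset {R : Finset (Reaction S)} (hse : isSE sd R)
    (hστ : ¬ mlift sd σ τ) (ρ : Multiset S) :
    seSummand sd R σ τ ρ =
      ((σ.powerset.filter (Quotient.mk (mliftSetoid sd) · = Quotient.mk _ ρ)).map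
        fun ρ' => rrSet R ρ' (Mgt sd σ τ ρ')).sum := by
  have hconst : ∀ ρ' ∈ σ.powerset.filter (Quotient.mk (mliftSetoid sd) · = Quotient.mk _ ρ),
      rrSet R ρ' (Mgt sd σ τ ρ') = rrSet R ρ (Mgt sd σ τ ρ) := fun ρ' hρ' =>
    rrSet_Mgt_eq_of_mlift hse hστ (Quotient.exact (Multiset.mem_filter.mp hρ').2)
  rw [Multiset.map_congr rfl hconst, Multiset.map_const', Multiset.sum_replicate, nsmul_eq_mul,
    card_filter_powerset_mk_eq, mul_comm]
  rfl

end Summands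

section Transitions

variable {R : Finset (Reaction S)} {σ : Multiset S}

theorem qSet_eq_sum_propensity {B : Set (Multiset S)} (hσ : σ ∉ B) :
    qSet R σ B = ∑ x ∈ R.filter (fun x => x.reag ≤ σ ∧ σ - x.reag + x.prod ∈ B),
      propensity σ x := by
  rw [qSet, Finset.filter_insert, if_neg hσ, ← Finset.sum_fiberwise_of_maps_to
    (g := fun x : Reaction S => σ - x.reag + x.prod) (t := (succs R σ).filter (· ∈ B))
    fun x hx => by
      obtain ⟨hxR, hle, hB⟩ := Finset.mem_filter.mp hx
      exact Finset.mem_filter.mpr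
        ⟨Finset.mem_image_of_mem _ (Finset.mem_filter.mpr ⟨hxR, hle⟩), hB⟩]
  refine Finset.sum_congr rfl fun θ hθ => ?_
  obtain ⟨-, hθB⟩ := Finset.mem_filter.mp hθ
  rw [q, if_neg (by rintro rfl; exact hσ hθB), qOff]
  refine Finset.sum_congr ?_ fun _ _ => rfl
  ext x
  simp only [Finset.mem_filter]
  constructor
  · rintro ⟨hxR, hle, rfl⟩
    exact ⟨⟨hxR, hle, hθB⟩, rfl⟩
  · rintro ⟨⟨hxR, hle, -⟩, rfl⟩
    exact ⟨hxR, hle, rfl⟩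

theorem propensity_eq_rate_mul_count_powerset (x : Reaction S) :
    propensity σ x = x.rate * (σ.powerset.count x.reag : ℝ) := by
  rw [propensity, Multiset.count_powerset]
  push_cast
  rfl

variable {sd : Setoid S} {τ : Multiset S}

theorem qSet_eq_sum_map_powerset (hστ : ¬ mlift sd σ τ) :
    qSet R σ {θ | mlift sd θ τ} = (σ.powerset.map fun ρ => rrSet R ρ (Mgt sd σ τ ρ)).sum := by
  rw [qSet_eq_sum_propensity hστ, Finset.sum_multiset_map_count,
    ← Finset.sum_fiberwise_of_maps_to (g := Reaction.reag) (t := σ.powerset.toFinset)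
      fun x hx => Multiset.mem_toFinset.mpr
        (Multiset.mem_powerset.mpr (Finset.mem_filter.mp hx).2.1)]
  refine Finset.sum_congr rfl fun ρ hρ => ?_
  have hle : ρ ≤ σ := Multiset.mem_powerset.mp (Multiset.mem_toFinset.mp hρ)
  have hMgt := fun π => mem_Mgt_iff (sd := sd) (τ := τ) (π := π) hle (equivalence_mlift.refl ρ)
  rw [← sum_rate_eq_rrSet (notMem_Mgt hστ (equivalence_mlift.refl ρ)), Finset.smul_sum]
  refine Finset.sum_congr ?_ fun x hx => ?_
  · ext x
    simp only [Finset.mem_filter]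
    constructor
    · rintro ⟨⟨hxR, -, hτ⟩, rfl⟩
      exact ⟨hxR, rfl, (hMgt _).mpr hτ⟩
    · rintro ⟨hxR, rfl, hπ⟩
      exact ⟨⟨hxR, hle, (hMgt _).mp hπ⟩, rfl⟩
  · rw [propensity_eq_rate_mul_count_powerset, (Finset.mem_filter.mp hx).2.1, nsmul_eq_mul,
      mul_comm]

end Transitions

theorem qSet_eq_finsum_over_classes_general (sd : Setoid S) (R : Finset (Reaction S))
    (hse : isSE sd R) (σ τ : Multiset S) (hστ : ¬ mlift sd σ τ) :
    (∀ ρ ρ' : Multiset S, mlift sd ρ ρ' →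
        seSummand sd R σ τ ρ = seSummand sd R σ τ ρ') ∧
    (Function.support (fun B : Quotient (mliftSetoid sd) =>
        seSummand sd R σ τ (Quotient.out B))).Finite ∧
    qSet R σ {θ | mlift sd θ τ} =
      ∑ᶠ B : Quotient (mliftSetoid sd), seSummand sd R σ τ (Quotient.out B) := by
  have hsummand : ∀ B : Quotient (mliftSetoid sd), seSummand sd R σ τ B.out =
      ((σ.powerset.filter (Quotient.mk _ · = B)).map fun ρ => rrSet R ρ (Mgt sd σ τ ρ)).sum :=
    fun B => by rw [seSummand_eq_sum_filter_powerset hse hστ, Quotient.out_eq]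
  refine ⟨fun ρ ρ' h => ?_, ?_, ?_⟩
  · rw [seSummand_eq_sum_filter_powerset hse hστ, seSummand_eq_sum_filter_powerset hse hστ,
      Quotient.sound h]
  · simp only [hsummand]
    exact (Finset.finite_toSet _).subset (Multiset.support_sum_map_filter_subset _ _ _)
  · simp only [qSet_eq_sum_map_powerset hστ, hsummand, Multiset.finsum_sum_map_filter]

/-- for a species equivalence `sd` and states `σ ≉ₗ τ`, the aggregate rate
from `σ` into the class of `τ` equals the sum over all ≈ₗ-classes `B̄` of
`rr[ρ_B̄, Mgt(ρ_B̄)] · ∏_H C(c_H(σ), c_H(ρ_B̄))`; the summand does not depend on the choice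
of representative, and only finitely many summands are nonzero. -/
theorem qSet_eq_finsum_over_classes (sd : Setoid S) (R : Finset (Reaction S))
    (hpos : posRates R) (hse : isSE sd R) (σ τ : Multiset S) (hστ : ¬ mlift sd σ τ) :
    (∀ ρ ρ' : Multiset S, mlift sd ρ ρ' →
        seSummand sd R σ τ ρ = seSummand sd R σ τ ρ') ∧
    (Function.support (fun B : Quotient (mliftSetoid sd) =>
        seSummand sd R σ τ (Quotient.out B))).Finite ∧
    qSet R σ {θ | mlift sd θ τ} =
      ∑ᶠ B : Quotient (mliftSetoid sd), seSummand sd R σ τ (Quotient.out B) :=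
  qSet_eq_finsum_over_classes_general sd R hse σ τ hστ

end
end

section
/- Let R be a reaction network over a species type S, ≈ a species equivalence for R with multiset lifting ≈ₗ, f a representative map for ≈, and R̂ the reduced network of R by f. Then for every multiset ρ over S and every ≈ₗ-equivalence class M with ρ ∉ M, it holds that rr_R[ρ, M] = rr_{R̂}(f(ρ), f(M)), where rr_R is the reaction rate computed in R and rr_{R̂} the reaction rate computed in R̂. -/
open Classical

noncomputable section

variable {S : Type*}

section Auxiliary

variable {sd : Setoid S} {f : S → S} {R : Finset (Reaction S)}

lemma rep_ff (hf : IsRep sd f) (s : S) : f (f s) = f s :=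
  hf.2 _ _ (hf.1 s)

lemma rep_rel_iff (hf : IsRep sd f) (s s' : S) : sd.r s s' ↔ f s = f s' := by
  refine ⟨hf.2 s s', fun h => ?_⟩
  have h1 : sd.r s (f s) := sd.iseqv.symm (hf.1 s)
  have h2 : sd.r (f s) s' := h ▸ hf.1 s'
  exact sd.iseqv.trans h1 h2

lemma map_f_idem (hf : IsRep sd f) (σ : Multiset S) : (σ.map f).map f = σ.map f := by
  rw [Multiset.map_map]
  exact Multiset.map_congr rfl (fun x _ => rep_ff hf x)

lemma classCount_eq_count (hf : IsRep sd f) (s : S) (σ : Multiset S) :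
    classCount sd s σ = (σ.map f).count (f s) := by
  rw [classCount, Multiset.count_map]
  congr 1
  apply Multiset.filter_congr
  intro x _
  exact rep_rel_iff hf s x

lemma mlift_iff_map (hf : IsRep sd f) (σ σ' : Multiset S) :
    mlift sd σ σ' ↔ σ.map f = σ'.map f := by
  constructor
  · intro h
    ext a
    by_cases ha : ∃ s, f s = a
    · obtain ⟨s, rfl⟩ := ha
      rw [← classCount_eq_count hf, ← classCount_eq_count hf]
      exact h s
    · rw [Multiset.count_eq_zero.2, Multiset.count_eq_zero.2] <;>
      · intro hmem
        obtain ⟨x, _, hx⟩ := Multiset.mem_map.1 hmem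
        exact ha ⟨x, hx⟩
  · intro h s
    rw [classCount_eq_count hf, classCount_eq_count hf, h]

lemma rrSet_eq_smb {ρ : Multiset S} {B : Set (Multiset S)} (h : ρ ∉ B) :
    rrSet R ρ B = rrSMBSet R ρ B := by
  unfold rrSet rrSMBSet
  rw [Finset.filter_insert, if_neg h]
  refine Finset.sum_congr rfl (fun π hπ => ?_)
  rw [rr, if_neg]
  intro hρπ
  exact h (hρπ ▸ (Finset.mem_filter.1 hπ).2)

lemma rrOff_eq_zero_of_not_reag {ρ π : Multiset S} (h : ∀ x ∈ R, x.reag ≠ ρ) :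
    rrOff R ρ π = 0 := by
  unfold rrOff
  rw [Finset.filter_eq_empty_iff.2 (fun x hx hc => h x hx hc.1), Finset.sum_empty]

lemma smb_eq_zero_of_not_reag {ρ : Multiset S} {B : Set (Multiset S)}
    (h : ρ ∉ Reags R) : rrSMBSet R ρ B = 0 := by
  have h' : ∀ x ∈ R, x.reag ≠ ρ := by
    intro x hx hc
    exact h (Finset.mem_image.2 ⟨x, hx, hc⟩)
  unfold rrSMBSet
  exact Finset.sum_eq_zero (fun π _ => rrOff_eq_zero_of_not_reag h')

lemma smb_step (hse : isSE sd R) {s s' : S} (h : sd.r s s')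
    (τ π₀ : Multiset S) (hM : ¬ mlift sd π₀ (s ::ₘ τ)) (hM' : ¬ mlift sd π₀ (s' ::ₘ τ)) :
    rrSMBSet R (s ::ₘ τ) {π | mlift sd π₀ π} = rrSMBSet R (s' ::ₘ τ) {π | mlift sd π₀ π} := by
  by_cases hP : ∃ π' ∈ Prods R, mlift sd π₀ π'
  · obtain ⟨π', hπ'P, hπ'⟩ := hP
    have hsetEq : {π | mlift sd π₀ π} = {π | mlift sd π' π} := by
      ext π
      exact ⟨fun hx t => (hπ' t).symm.trans (hx t), fun hx t => (hπ' t).trans (hx t)⟩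
    by_cases hR : (s ::ₘ τ) ∈ Reags R ∨ (s' ::ₘ τ) ∈ Reags R
    · have key := hse s s' h τ hR π' hπ'P
      rw [rrSet_eq_smb, rrSet_eq_smb] at key
      · rw [hsetEq]
        exact key
      · intro hc
        exact hM' (fun t => (hπ' t).trans (hc t))
      · intro hc
        exact hM (fun t => (hπ' t).trans (hc t))
    · push_neg at hR
      rw [smb_eq_zero_of_not_reag hR.1, smb_eq_zero_of_not_reag hR.2]
  · push_neg at hP
    have he : (Prods R).filter (· ∈ {π | mlift sd π₀ π}) = ∅ :=
      Finset.filter_eq_empty_iff.2 (fun π hπ hc => hP π hπ hc)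
    unfold rrSMBSet
    rw [he, Finset.sum_empty, Finset.sum_empty]

lemma smb_replace (hse : isSE sd R) (hf : IsRep sd f) :
    ∀ σ κ π₀ : Multiset S, π₀.map f ≠ σ.map f + κ.map f →
      rrSMBSet R (σ + κ) {π | mlift sd π₀ π} = rrSMBSet R (σ.map f + κ) {π | mlift sd π₀ π} := by
  intro σ
  induction σ using Multiset.induction_on with
  | empty => intro κ π₀ _; simp
  | cons a σ ih =>
    intro κ π₀ hne
    have hmapeq : ((a ::ₘ σ) + κ).map f = (a ::ₘ σ).map f + κ.map f := by
      rw [Multiset.map_add]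
    have key1 : rrSMBSet R ((a ::ₘ σ) + κ) {π | mlift sd π₀ π}
        = rrSMBSet R (f a ::ₘ (σ + κ)) {π | mlift sd π₀ π} := by
      rw [Multiset.cons_add]
      refine smb_step hse (sd.iseqv.symm (hf.1 a)) (σ + κ) π₀ ?_ ?_
      · intro hc
        apply hne
        rw [mlift_iff_map hf] at hc
        rw [hc]
        simp [Multiset.map_add]
      · intro hc
        apply hne
        rw [mlift_iff_map hf] at hc
        rw [hc]
        simp [Multiset.map_add, rep_ff hf]
    have heq2 : f a ::ₘ (σ + κ) = σ + (f a ::ₘ κ) := by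
      rw [add_comm σ (f a ::ₘ κ), Multiset.cons_add, add_comm κ σ]
    have key2 := ih (f a ::ₘ κ) π₀ (by
      intro hc
      apply hne
      rw [hc]
      simp [Multiset.map_cons, rep_ff hf])
    have heq3 : σ.map f + (f a ::ₘ κ) = (a ::ₘ σ).map f + κ := by
      rw [Multiset.map_cons, add_comm (σ.map f), Multiset.cons_add, Multiset.cons_add,
        add_comm κ (σ.map f)]
    rw [key1, heq2, key2, heq3]

lemma smb_as_reaction_sum (hf : IsRep sd f) (ρ π₀ : Multiset S) :
    rrSMBSet R ρ {π | mlift sd π₀ π}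
      = ∑ x ∈ R.filter (fun x => x.reag = ρ ∧ x.prod.map f = π₀.map f), x.rate := by
  have hmaps : ∀ x ∈ R.filter (fun x => x.reag = ρ ∧ x.prod.map f = π₀.map f),
      x.prod ∈ (Prods R).filter (· ∈ {π | mlift sd π₀ π}) := by
    intro x hx
    obtain ⟨hxR, hx1, hx2⟩ := Finset.mem_filter.1 hx
    exact Finset.mem_filter.2 ⟨Finset.mem_image.2 ⟨x, hxR, rfl⟩,
      (mlift_iff_map hf π₀ x.prod).2 hx2.symm⟩
  rw [← Finset.sum_fiberwise_of_maps_to hmaps Reaction.rate]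
  refine Finset.sum_congr rfl (fun π hπ => ?_)
  have hπM : π₀.map f = π.map f := (mlift_iff_map hf π₀ π).1 (Finset.mem_filter.1 hπ).2
  rw [rrOff, Finset.filter_filter]
  refine Finset.sum_congr (Finset.filter_congr (fun x _ => ?_)) (fun _ _ => rfl)
  constructor
  · rintro ⟨h1, h3⟩
    exact ⟨⟨h1, by rw [h3, ← hπM]⟩, h3⟩
  · rintro ⟨⟨h1, _⟩, h3⟩
    exact ⟨h1, h3⟩

lemma rrOff_reduced (hpos : posRates R) (hf : IsRep sd f) (ρ : Multiset S) (pihat : Multiset S) :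
    rrOff (reduced R f) (ρ.map f) pihat
      = ∑ x ∈ R.filter (fun x => x.reag = ρ.map f ∧ x.prod.map f = pihat), x.rate := by
  set rhohat := ρ.map f with hrhohat
  set T := R.filter (fun x => x.reag = rhohat ∧ x.prod.map f = pihat) with hT
  set β : ℝ := ∑ x ∈ T, x.rate with hβ
  by_cases hTn : T.Nonempty
  · obtain ⟨x0, hx0⟩ := hTn
    obtain ⟨hx0R, hx01, hx02⟩ := Finset.mem_filter.1 hx0
    have hβpos : 0 < β :=
      Finset.sum_pos (fun x hx => hpos x (Finset.mem_filter.1 hx).1) ⟨x0, hx0⟩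
    have hmem : (⟨rhohat, β, pihat⟩ : Reaction S) ∈ reduced R f := by
      unfold reduced
      refine Finset.mem_filter.2 ⟨?_, hβpos⟩
      refine Finset.mem_image.2 ⟨(rhohat, pihat), ?_, rfl⟩
      refine Finset.mem_filter.2 ⟨?_, ?_⟩
      · exact Finset.mem_image.2 ⟨x0, hx0R, by rw [hx01, hx02]⟩
      · exact map_f_idem hf ρ
    unfold rrOff
    rw [show (reduced R f).filter (fun x => x.reag = rhohat ∧ x.prod = pihat)
        = {(⟨rhohat, β, pihat⟩ : Reaction S)} from ?_, Finset.sum_singleton]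
    apply Finset.eq_singleton_iff_unique_mem.2
    constructor
    · exact Finset.mem_filter.2 ⟨hmem, rfl, rfl⟩
    · intro y hy
      obtain ⟨hyred, hy1, hy2⟩ := Finset.mem_filter.1 hy
      obtain ⟨hyim, _⟩ := Finset.mem_filter.1 (by exact hyred)
      obtain ⟨p, _, hp⟩ := Finset.mem_image.1 hyim
      have hp1 : p.1 = rhohat := by rw [← hy1, ← hp]
      have hp2 : p.2 = pihat := by rw [← hy2, ← hp]
      rw [← hp, hp1, hp2]
  · have hβ0 : β = 0 := by
      rw [hβ, Finset.not_nonempty_iff_eq_empty.1 hTn, Finset.sum_empty]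
    have hempty : (reduced R f).filter (fun x => x.reag = rhohat ∧ x.prod = pihat) = ∅ := by
      refine Finset.filter_eq_empty_iff.2 ?_
      rintro y hyred ⟨hy1, hy2⟩
      obtain ⟨hyim, hyrate⟩ := Finset.mem_filter.1 hyred
      obtain ⟨p, _, hp⟩ := Finset.mem_image.1 hyim
      have hp1 : p.1 = rhohat := by rw [← hy1, ← hp]
      have hp2 : p.2 = pihat := by rw [← hy2, ← hp]
      have : y.rate = β := by
        rw [← hp, hβ, hT, hp1, hp2]
      rw [this, hβ0] at hyrate
      exact lt_irrefl 0 hyrate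
    unfold rrOff
    rw [hempty, Finset.sum_empty, hβ0]

end Auxiliary


/-- for a species equivalence `sd`, a representative map `f` and the reduced
network `R̂`, for every multiset `ρ` and ≈ₗ-class `M` (represented by `π₀`) with `ρ ∉ M`,
`rr_R[ρ, M] = rr_R̂(f(ρ), f(M))`. -/
theorem rrSet_eq_rr_reduced (sd : Setoid S) (R : Finset (Reaction S)) (hpos : posRates R)
    (hse : isSE sd R) (f : S → S) (hf : IsRep sd f) :
    ∀ ρ π₀ : Multiset S, ¬ mlift sd π₀ ρ →
      rrSet R ρ {π | mlift sd π₀ π} = rr (reduced R f) (ρ.map f) (π₀.map f) := by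
  intro ρ π₀ h
  have hmap : π₀.map f ≠ ρ.map f := fun hc => h ((mlift_iff_map hf π₀ ρ).2 hc)
  rw [rrSet_eq_smb (h : ρ ∉ {π | mlift sd π₀ π})]
  have hrep := smb_replace hse hf ρ 0 π₀ (by simpa using hmap)
  simp only [add_zero] at hrep
  rw [hrep, smb_as_reaction_sum hf (ρ.map f) π₀, rr, if_neg (fun hc => hmap hc.symm),
    rrOff_reduced hpos hf]

end
end
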